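/- Let G be a finite simple graph of order n and minimum degree δ, let k be an integer, and suppose {S₁,...,S_r} is a partition of the vertex set of G into r ≥ 2 global defensive k-alliances. Then r ≤ ⌊(√(k²+4n) - k)/2⌋ and r ≤ ⌊(δ-k+2)/2⌋. -/

import Mathlib

open Finset

variable {V : Type*}

/-- `degIn G S v` is the number of neighbors that `v` has in `S` (denoted `δ_S(v)`). -/
def degIn [Fintype V] [DecidableEq V] (G : SimpleGraph V) [DecidableRel G.Adj]
    (S : Finset V) (v : V) : ℕ :=
  (G.neighborFinset v ∩ S).card

/-- A nonempty set `S` is a defensive `k`-alliance in `G` if every vertex of `S` has at least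
`k` more neighbors inside `S` than outside. -/
def IsDefensiveKAlliance [Fintype V] [DecidableEq V] (G : SimpleGraph V) [DecidableRel G.Adj]
    (k : ℤ) (S : Finset V) : Prop :=
  S.Nonempty ∧ ∀ v ∈ S, (degIn G Sᶜ v : ℤ) + k ≤ (degIn G S v : ℤ)

/-- The defensive `k`-alliance number: minimum cardinality of a defensive `k`-alliance. -/
noncomputable def defensiveAllianceNum [Fintype V] [DecidableEq V] (G : SimpleGraph V)
    [DecidableRel G.Adj] (k : ℤ) : ℕ :=
  sInf {m : ℕ | ∃ S : Finset V, IsDefensiveKAlliance G k S ∧ S.card = m}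

/-- `S` is a dominating set: every vertex outside `S` has a neighbor in `S`. -/
def IsDominatingSet (G : SimpleGraph V) (S : Finset V) : Prop :=
  ∀ v, v ∉ S → ∃ u ∈ S, G.Adj u v

/-- A global defensive `k`-alliance is a defensive `k`-alliance which is also dominating. -/
def IsGlobalDefensiveKAlliance [Fintype V] [DecidableEq V] (G : SimpleGraph V)
    [DecidableRel G.Adj] (k : ℤ) (S : Finset V) : Prop :=
  IsDefensiveKAlliance G k S ∧ IsDominatingSet G S

/-- The global defensive `k`-alliance number `γ_k^d(G)`. -/
noncomputable def globalDefensiveAllianceNum [Fintype V] [DecidableEq V] (G : SimpleGraph V)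
    [DecidableRel G.Adj] (k : ℤ) : ℕ :=
  sInf {m : ℕ | ∃ S : Finset V, IsGlobalDefensiveKAlliance G k S ∧ S.card = m}

/-!
A vertex `v` of a part `p` is dominated by each of the other `r - 1` parts, through distinct
neighbours, so `δ_{V∖p}(v) ≥ r - 1`, and the alliance condition gives `δ_p(v) ≥ r - 1 + k`.
Hence every part has at least `r + k` vertices, so `n ≥ r (r + k)`, which is the first bound;
and every degree is `δ_p(v) + δ_{V∖p}(v) ≥ 2r - 2 + k`, which is the second.
-/

lemma le_floor_root_of_mul_add_le {r k : ℤ} {n : ℕ} (h : r * (r + k) ≤ n) :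
    r ≤ ⌊(Real.sqrt ((k : ℝ) ^ 2 + 4 * (n : ℝ)) - k) / 2⌋ := by
  have hsqrt : 2 * (r : ℝ) + k ≤ Real.sqrt ((k : ℝ) ^ 2 + 4 * n) := by
    rcases le_or_gt (2 * (r : ℝ) + k) 0 with hneg | hpos
    · exact hneg.trans (Real.sqrt_nonneg _)
    · have hR : (r : ℝ) * (r + k) ≤ n := by exact_mod_cast h
      exact Real.le_sqrt_of_sq_le (by nlinarith)
  rw [Int.le_floor]
  linarith

section

variable [Fintype V] [DecidableEq V] {G : SimpleGraph V} [DecidableRel G.Adj]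

lemma degIn_add_degIn_compl (S : Finset V) (v : V) :
    degIn G S v + degIn G Sᶜ v = G.degree v := by
  rw [degIn, degIn, ← card_union_of_disjoint
    (disjoint_compl_right.mono inf_le_right inf_le_right), ← inter_union_distrib_left,
    union_compl, inter_univ, SimpleGraph.card_neighborFinset_eq_degree]

lemma degIn_lt_card {S : Finset V} {v : V} (hv : v ∈ S) : degIn G S v < S.card :=
  card_lt_card <| (ssubset_iff_of_subset inter_subset_right).2 ⟨v, hv, by simp⟩

variable {P : Finpartition (univ : Finset V)} {p : Finset V} {v : V} {k : ℤ}

lemma card_parts_le_degIn_compl_add_one (hdom : ∀ q ∈ P.parts, IsDominatingSet G q)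
    (hp : p ∈ P.parts) (hv : v ∈ p) : #P.parts ≤ degIn G pᶜ v + 1 := by
  have hsurj : #(P.parts.erase p) ≤ degIn G pᶜ v := by
    refine card_le_card_of_surjOn P.part fun q hq => ?_
    obtain ⟨hqp, hq⟩ := mem_erase.1 hq
    obtain ⟨u, huq, huv⟩ := hdom q hq v fun hvq => hqp (P.eq_of_mem_parts hq hp hvq hv)
    have hup : u ∉ p := fun hup => hqp (P.eq_of_mem_parts hq hp huq hup)
    exact ⟨u, by simpa [hup] using huv.symm, P.part_eq_of_mem hq huq⟩
  rw [card_erase_of_mem hp] at hsurj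
  omega

lemma card_parts_sub_one_add_le_degIn (hP : ∀ q ∈ P.parts, IsGlobalDefensiveKAlliance G k q)
    (hp : p ∈ P.parts) (hv : v ∈ p) : (#P.parts : ℤ) - 1 + k ≤ degIn G p v := by
  have hout := card_parts_le_degIn_compl_add_one (fun q hq => (hP q hq).2) hp hv
  have halliance := (hP p hp).1.2 v hv
  omega

lemma card_parts_add_le_card_of_mem (hP : ∀ q ∈ P.parts, IsGlobalDefensiveKAlliance G k q)
    (hp : p ∈ P.parts) : (#P.parts : ℤ) + k ≤ #p := by
  obtain ⟨v, hv⟩ := (hP p hp).1.1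
  have hin := card_parts_sub_one_add_le_degIn hP hp hv
  have hlt := degIn_lt_card (G := G) hv
  omega

lemma card_parts_mul_le_card (hP : ∀ q ∈ P.parts, IsGlobalDefensiveKAlliance G k q) :
    (#P.parts : ℤ) * (#P.parts + k) ≤ Fintype.card V := by
  calc (#P.parts : ℤ) * (#P.parts + k) = ∑ _ ∈ P.parts, ((#P.parts : ℤ) + k) := by simp
    _ ≤ ∑ p ∈ P.parts, (#p : ℤ) := sum_le_sum fun p hp => card_parts_add_le_card_of_mem hP hp
    _ = Fintype.card V := by rw [← Nat.cast_sum, P.sum_card_parts, card_univ]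

lemma two_mul_card_parts_sub_two_add_le_minDegree [Nonempty V]
    (hP : ∀ q ∈ P.parts, IsGlobalDefensiveKAlliance G k q) :
    2 * (#P.parts : ℤ) - 2 + k ≤ G.minDegree := by
  obtain ⟨v, hv⟩ := G.exists_minimal_degree_vertex
  have hp : P.part v ∈ P.parts := P.part_mem.2 (mem_univ v)
  have hvp : v ∈ P.part v := P.mem_part_self.2 (mem_univ v)
  have hin := card_parts_sub_one_add_le_degIn hP hp hvp
  have hout := card_parts_le_degIn_compl_add_one (fun q hq => (hP q hq).2) hp hvp
  have hsplit := degIn_add_degIn_compl (G := G) (P.part v) v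
  rw [hv]
  omega

end

theorem partition_globalDefensiveKAlliances_bounds_general [Fintype V] [DecidableEq V] [Nonempty V]
    (G : SimpleGraph V) [DecidableRel G.Adj] (k : ℤ) (r : ℕ)
    (P : Finpartition (univ : Finset V)) (hcard : P.parts.card = r)
    (hparts : ∀ p ∈ P.parts, IsGlobalDefensiveKAlliance G k p) :
    (r : ℤ) ≤ ⌊(Real.sqrt ((k : ℝ) ^ 2 + 4 * (Fintype.card V : ℝ)) - (k : ℝ)) / 2⌋ ∧
      (r : ℤ) ≤ ⌊((G.minDegree : ℚ) - (k : ℚ) + 2) / 2⌋ := by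
  subst hcard
  refine ⟨le_floor_root_of_mul_add_le (card_parts_mul_le_card hparts), ?_⟩
  have hdeg : 2 * (#P.parts : ℚ) - 2 + k ≤ G.minDegree := by
    exact_mod_cast two_mul_card_parts_sub_two_add_le_minDegree hparts
  rw [Int.le_floor]
  push_cast
  linarith

/-- Theorem: if the vertex set of `G` is partitioned into `r ≥ 2` global defensive
`k`-alliances, then `r ≤ ⌊(√(k²+4n) - k)/2⌋` and `r ≤ ⌊(δ-k+2)/2⌋`. -/
theorem partition_globalDefensiveKAlliances_bounds [Fintype V] [DecidableEq V] [Nonempty V]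
    (G : SimpleGraph V) [DecidableRel G.Adj] (k : ℤ) (r : ℕ) (hr : 2 ≤ r)
    (P : Finpartition (univ : Finset V)) (hcard : P.parts.card = r)
    (hparts : ∀ p ∈ P.parts, IsGlobalDefensiveKAlliance G k p) :
    (r : ℤ) ≤ ⌊(Real.sqrt ((k : ℝ) ^ 2 + 4 * (Fintype.card V : ℝ)) - (k : ℝ)) / 2⌋ ∧
      (r : ℤ) ≤ ⌊((G.minDegree : ℚ) - (k : ℚ) + 2) / 2⌋ :=
  partition_globalDefensiveKAlliances_bounds_general G k r P hcard hparts
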